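/- Let V be a vector space over a field 𝔽 equipped with an n-linear map f : V × … × V → V (n ≥ 2). For any basis ℬ = {e_i : i ∈ I} of V, the space V decomposes as the f-orthogonal direct sum of strongly f-invariant linear subspaces V = ⊕_{[V_{[e_i]}] ∈ ℱ/≈} ⌢V_{[e_i]}; that is, V is the internal direct sum of the subspaces ⌢V_{[e_i]}, distinct summands are pairwise f-orthogonal, and each summand is strongly f-invariant. -/

import Mathlib

/- Common setting: `V` is a vector space over a field `𝔽`, and `f` is an
`n`-linear map on `V` where `n = m + 1 ≥ 2` (i.e. `1 ≤ m`).  Tuples of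
length `n - 1 = m` index the last arguments of the set-valued map `F`. -/

open scoped Classical

noncomputable section

variable {𝔽 V I : Type*}

/-- The set `V* = V \ {0}` of nonzero vectors. -/
abbrev Vstar (V : Type*) [Zero V] := {v : V // v ≠ 0}

/-- The disjoint union `ℬ ∪̇ ℬ̄`, encoded by indices: `(false, i)` stands for the
basis vector `e i ∈ ℬ` and `(true, i)` for the formal bar symbol `ē i ∈ ℬ̄`. -/
abbrev BSym (I : Type*) := Bool × I

/-- The bar-swap on `ℬ ∪̇ ℬ̄`. -/
def barSwap {I : Type*} (s : BSym I) : BSym I := (!s.1, s.2)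

variable [Field 𝔽] [AddCommGroup V] [Module 𝔽 V] {m : ℕ}

/-- A basis vector, as an element of `V*`. -/
def bstar (b : Module.Basis I 𝔽 V) (i : I) : Vstar V := ⟨b i, b.ne_zero i⟩

/-- The set-valued map `F : 𝒫(V*) × (ℬ ∪̇ ℬ̄)^{n-1} → 𝒫(V*)` associated to the
`n`-linear map `f` and the basis `b` (here `n = m + 1`). -/
def Fmap (b : Module.Basis I 𝔽 V) (f : MultilinearMap 𝔽 (fun _ : Fin (m + 1) => V) V)
    (U : Set (Vstar V)) (ξ : Fin m → BSym I) : Set (Vstar V) :=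
  if ∀ t, (ξ t).1 = false then
    {w | ∃ (k : Fin (m + 1)) (σ : Equiv.Perm (Fin m)), ∃ u ∈ U,
      f (Fin.insertNth k u.1 fun t => b (ξ (σ t)).2) = w.1}
  else if ∀ t, (ξ t).1 = true then
    {w | ∃ (k : Fin (m + 1)) (σ : Equiv.Perm (Fin m)), ∃ u ∈ U,
      f (Fin.insertNth k w.1 fun t => b (ξ (σ t)).2) = u.1}
  else ∅

/-- Iterated application of `F` along a list of `(n-1)`-tuples. -/
def iterF (b : Module.Basis I 𝔽 V) (f : MultilinearMap 𝔽 (fun _ : Fin (m + 1) => V) V) :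
    Set (Vstar V) → List (Fin m → BSym I) → Set (Vstar V)
  | U, [] => U
  | U, X :: Xs => iterF b f (Fmap b f U X) Xs

/-- `X` is a connection from `e i` to `e j`.  (Since `F(∅,⋯) = ∅`, the requirement
that all intermediate iterated images are nonempty is equivalent to the final
image containing `e j`.) -/
def IsConnection (b : Module.Basis I 𝔽 V) (f : MultilinearMap 𝔽 (fun _ : Fin (m + 1) => V) V)
    (i j : I) (X : List (Fin m → BSym I)) : Prop :=
  X ≠ [] ∧ bstar b j ∈ iterF b f {bstar b i} X

/-- `e i` is connected to `e j`. -/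
def Connected (b : Module.Basis I 𝔽 V) (f : MultilinearMap 𝔽 (fun _ : Fin (m + 1) => V) V)
    (i j : I) : Prop :=
  i = j ∨ ∃ X : List (Fin m → BSym I), IsConnection b f i j X

/-- Two subspaces `W₁, W₂` are `f`-orthogonal. -/
def FOrthogonal (f : MultilinearMap 𝔽 (fun _ : Fin (m + 1) => V) V)
    (W₁ W₂ : Submodule 𝔽 V) : Prop :=
  ∀ k₁ k₂ : Fin (m + 1), k₁ ≠ k₂ →
    ∀ v : Fin (m + 1) → V, v k₁ ∈ W₁ → v k₂ ∈ W₂ → f v = 0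

/-- A subspace `W` is strongly `f`-invariant: `f(V,…,W,…,V) ⊆ W` for every slot. -/
def StronglyInvariant (f : MultilinearMap 𝔽 (fun _ : Fin (m + 1) => V) V)
    (W : Submodule 𝔽 V) : Prop :=
  ∀ (k : Fin (m + 1)) (v : Fin (m + 1) → V), v k ∈ W → f v ∈ W

/-- `V_{[e i]}`, the span of the connection class of `e i`. -/
def classSpan (b : Module.Basis I 𝔽 V) (f : MultilinearMap 𝔽 (fun _ : Fin (m + 1) => V) V)
    (i : I) : Submodule 𝔽 V :=
  Submodule.span 𝔽 (⇑b '' {j | Connected b f i j})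

/-- The projection `Π_{V_{[e c]}} : V → V_{[e c]}` relative to the decomposition
`V = ⊕ V_{[e i]}` (expressed through basis coordinates). -/
def projClass (b : Module.Basis I 𝔽 V) (f : MultilinearMap 𝔽 (fun _ : Fin (m + 1) => V) V)
    (c : I) : V →ₗ[𝔽] V :=
  b.constr 𝔽 fun j => if Connected b f c j then b j else 0

/-- One step of the relation `≈`: the sum over `k₁ < k₂` of
`Π_{V_{[c]}}(f(V,…,V_{[d]},…,V_{[d]},…,V)) + Π_{V_{[d]}}(f(V,…,V_{[c]},…,V_{[c]},…,V))`
is nonzero. -/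
def ApproxStep (b : Module.Basis I 𝔽 V) (f : MultilinearMap 𝔽 (fun _ : Fin (m + 1) => V) V)
    (c d : I) : Prop :=
  ∃ k₁ k₂ : Fin (m + 1), k₁ < k₂ ∧
    ((∃ v : Fin (m + 1) → V, v k₁ ∈ classSpan b f d ∧ v k₂ ∈ classSpan b f d ∧
        projClass b f c (f v) ≠ 0) ∨
     (∃ v : Fin (m + 1) → V, v k₁ ∈ classSpan b f c ∧ v k₂ ∈ classSpan b f c ∧
        projClass b f d (f v) ≠ 0))

/-- `V_{[e i]} ≈ V_{[e j]}`: either they coincide (same connection class) or they are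
linked by a finite chain of classes with nonvanishing projection sums. -/
def Approx (b : Module.Basis I 𝔽 V) (f : MultilinearMap 𝔽 (fun _ : Fin (m + 1) => V) V)
    (i j : I) : Prop :=
  Relation.ReflTransGen (fun c d => Connected b f c d ∨ ApproxStep b f c d) i j

/-- `⌢V_{[e i]} = ⊕_{V_{[e j]} ∈ [V_{[e i]}]} V_{[e j]}`. -/
def hatSpan (b : Module.Basis I 𝔽 V) (f : MultilinearMap 𝔽 (fun _ : Fin (m + 1) => V) V)
    (i : I) : Submodule 𝔽 V :=
  Submodule.span 𝔽 (⇑b '' {j | Approx b f i j})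

/-- Two decompositions of `V` as `f`-orthogonal direct sums of strongly `f`-invariant
subspaces (given as the sets of their summands) are isomorphic: there is a linear
automorphism `h` of `V` commuting with `f` carrying the summands of the first
bijectively onto the summands of the second. -/
def IsoDecomp (f : MultilinearMap 𝔽 (fun _ : Fin (m + 1) => V) V)
    (S T : Set (Submodule 𝔽 V)) : Prop :=
  ∃ h : V ≃ₗ[𝔽] V,
    (∀ v : Fin (m + 1) → V, f (fun k => h (v k)) = h (f v)) ∧
    (Submodule.map (h : V →ₗ[𝔽] V)) '' S = T

/-- `X` is a strongly `f'`-invariant subspace of `W`, where `f'` is the restriction of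
`f` to `W`: `f(W,…,X,…,W) ⊆ X` for every slot. -/
def SInvIn (f : MultilinearMap 𝔽 (fun _ : Fin (m + 1) => V) V)
    (W X : Submodule 𝔽 V) : Prop :=
  ∀ (k : Fin (m + 1)) (v : Fin (m + 1) → V), (∀ t, v t ∈ W) → v k ∈ X → f v ∈ X

/-- `W` is `f'`-simple, `f'` being the restriction of `f` to `W`: the restricted map is
nonzero and the only strongly `f'`-invariant subspaces of `W` are `0` and `W`. -/
def SimpleIn (f : MultilinearMap 𝔽 (fun _ : Fin (m + 1) => V) V)
    (W : Submodule 𝔽 V) : Prop :=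
  (∃ v : Fin (m + 1) → V, (∀ t, v t ∈ W) ∧ f v ≠ 0) ∧
  ∀ X : Submodule 𝔽 V, X ≤ W → SInvIn f W X → X = ⊥ ∨ X = W

/-- The annihilator of the restriction `f'` of `f` to `W`. -/
def annIn (f : MultilinearMap 𝔽 (fun _ : Fin (m + 1) => V) V)
    (W : Submodule 𝔽 V) : Set V :=
  {w | w ∈ W ∧ ∀ (k : Fin (m + 1)) (v : Fin (m + 1) → V),
    (∀ t, v t ∈ W) → v k = w → f v = 0}

/-- `𝓘(w)`: the smallest strongly `f'`-invariant subspace of `W` containing `w`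
(equivalently, the ideal of `(W, f')` generated by `w`). -/
def idealGenIn (f : MultilinearMap 𝔽 (fun _ : Fin (m + 1) => V) V)
    (W : Submodule 𝔽 V) (w : V) : Submodule 𝔽 V :=
  sInf {X : Submodule 𝔽 V | X ≤ W ∧ SInvIn f W X ∧ w ∈ X}

/-- `S` is an `i`-division basis of `W` with respect to the restriction `f'` of `f`:
whenever `c ∈ S`, `b₁, …, b_{n-1} ∈ W` and `f'(b₁,…,c,…,b_{n-1}) = w ≠ 0` with `c` in
some slot `k`, then `c, b₁, …, b_{n-1} ∈ 𝓘(w)`. -/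
def IDivisionBasisIn (f : MultilinearMap 𝔽 (fun _ : Fin (m + 1) => V) V)
    (W : Submodule 𝔽 V) (S : Set V) : Prop :=
  ∀ c ∈ S, ∀ (k : Fin (m + 1)) (v : Fin (m + 1) → V),
    (∀ t, v t ∈ W) → v k = c → f v ≠ 0 → ∀ t, v t ∈ idealGenIn f W (f v)

/-! If `f (e_{a₀}, …, e_{aₘ}) ≠ 0`, any two of its arguments are connected: step forward from
`e_{a_s}` along the tuple of the other arguments, then back to `e_{a_t}` along the bar-swapped
tuple of the arguments other than `e_{a_t}`. Reversed, bar-swapped connections show that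
connection, hence `≈`, is an equivalence relation, so the `⌢V_{[e_i]}` are spanned by the
basis vectors of the blocks of a partition of `ℬ`, which gives the direct sum. By
multilinearity, orthogonality and invariance reduce to basis tuples: the arguments of a nonzero
value are connected, and a basis vector `e_p` in the support of `f (e_a)` satisfies
`[e_{a_k}] ≈ [e_p]` in one step, since the first two arguments of `f (e_a)` lie in
`V_{[e_{a_k}]}` and its projection onto `V_{[e_p]}` is nonzero. -/

section LinearAlgebra

variable {R M N ι κ : Type*} [Semiring R] [AddCommMonoid M] [Module R M]

theorem LinearIndependent.iSupIndep_span_image {v : ι → M} (hv : LinearIndependent R v)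
    {s : κ → Set ι} (hs : Pairwise fun k l => Disjoint (s k) (s l)) :
    iSupIndep fun k => Submodule.span R (v '' s k) := by
  refine iSupIndep_def.2 fun k => ?_
  simp_rw [← Submodule.span_iUnion₂, ← Set.image_iUnion₂]
  exact hv.disjoint_span_image (Set.disjoint_iUnion₂_right.2 fun j hj => hs hj.symm)

theorem LinearIndependent.iSupIndep_span_image_classes {v : ι → M} (hv : LinearIndependent R v)
    {r : ι → ι → Prop} (hr : Equivalence r) :
    iSupIndep fun W : {W : Submodule R M // ∃ i, W = Submodule.span R (v '' {j | r i j})} =>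
      W.1 := by
  choose rep hrep using
    fun W : {W : Submodule R M // ∃ i, W = Submodule.span R (v '' {j | r i j})} => W.2
  have hW : (fun W => W.1) = fun W => Submodule.span R (v '' {j | r (rep W) j}) := funext hrep
  rw [hW]
  refine hv.iSupIndep_span_image fun W₁ W₂ hne => Set.disjoint_left.2 fun j h₁ h₂ => hne ?_
  have hclass : {j | r (rep W₁) j} = {j | r (rep W₂) j} := Set.ext fun p =>
    ⟨hr.trans (hr.trans h₂ (hr.symm h₁)), hr.trans (hr.trans h₁ (hr.symm h₂))⟩
  exact Subtype.ext (by rw [hrep W₁, hrep W₂, hclass])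

theorem Submodule.iSup_span_image_classes {r : ι → ι → Prop} (hr : ∀ i, r i i) (v : ι → M) :
    (⨆ W : {W : Submodule R M // ∃ i, W = Submodule.span R (v '' {j | r i j})}, W.1) =
      Submodule.span R (Set.range v) := by
  refine le_antisymm (iSup_le ?_) (Submodule.span_le.2 ?_)
  · rintro ⟨_, i, rfl⟩
    exact Submodule.span_mono (Set.image_subset_range _ _)
  · rintro _ ⟨j, rfl⟩
    exact le_iSup (fun W : {W : Submodule R M // ∃ i, W = Submodule.span R (v '' {j | r i j})} =>
      W.1) ⟨_, j, rfl⟩ (Submodule.subset_span ⟨j, hr j, rfl⟩)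

variable [AddCommMonoid N] [Module R N] [Fintype ι]

theorem MultilinearMap.apply_mem_of_forall_mem_span (f : MultilinearMap R (fun _ : ι => M) N)
    (W : Submodule R N) (S : ι → Set M) (H : ∀ v : ι → M, (∀ t, v t ∈ S t) → f v ∈ W)
    (v : ι → M) (hv : ∀ t, v t ∈ Submodule.span R (S t)) : f v ∈ W := by
  suffices ∀ s : Finset ι, ∀ v : ι → M, (∀ t ∈ s, v t ∈ Submodule.span R (S t)) →
      (∀ t ∉ s, v t ∈ S t) → f v ∈ W from
    this Finset.univ v (fun t _ => hv t) (fun t ht => absurd (Finset.mem_univ t) ht)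
  intro s
  induction s using Finset.induction_on with
  | empty => exact fun v _ hS => H v fun t => hS t (Finset.notMem_empty t)
  | insert t₀ s ht₀ ih =>
    intro v hspan hS
    have hslice : Submodule.span R (S t₀) ≤ W.comap (f.toLinearMap v t₀) := by
      refine Submodule.span_le.2 fun x hx => ih _ (fun t ht => ?_) (fun t ht => ?_)
      · rw [Function.update_of_ne (ne_of_mem_of_not_mem ht ht₀)]
        exact hspan t (Finset.mem_insert_of_mem ht)
      · rcases eq_or_ne t t₀ with rfl | htt₀
        · rwa [Function.update_self]
        · rw [Function.update_of_ne htt₀]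
          exact hS t (by simp [htt₀, ht])
    simpa using hslice (hspan t₀ (Finset.mem_insert_self t₀ s))

theorem MultilinearMap.apply_mem_of_forall_mem_span_image
    (f : MultilinearMap R (fun _ : ι => M) N) (e : κ → M) (W : Submodule R N) (s : ι → Set κ)
    (H : ∀ a : ι → κ, (∀ t, a t ∈ s t) → f (fun t => e (a t)) ∈ W)
    (v : ι → M) (hv : ∀ t, v t ∈ Submodule.span R (e '' s t)) : f v ∈ W := by
  refine f.apply_mem_of_forall_mem_span W _ (fun w hw => ?_) v hv
  choose a ha hea using hw
  rw [show w = fun t => e (a t) from funext fun t => (hea t).symm]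
  exact H a ha

end LinearAlgebra

section Decomposition

variable (b : Module.Basis I 𝔽 V) (f : MultilinearMap 𝔽 (fun _ : Fin (m + 1) => V) V)

theorem Fmap_mono {U U' : Set (Vstar V)} (h : U ⊆ U') (ξ : Fin m → BSym I) :
    Fmap b f U ξ ⊆ Fmap b f U' ξ := by
  unfold Fmap
  split_ifs
  · rintro w ⟨k, σ, u, hu, he⟩; exact ⟨k, σ, u, h hu, he⟩
  · rintro w ⟨k, σ, u, hu, he⟩; exact ⟨k, σ, u, h hu, he⟩
  · exact subset_rfl

theorem iterF_mono : ∀ (X : List (Fin m → BSym I)) {U U' : Set (Vstar V)},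
    U ⊆ U' → iterF b f U X ⊆ iterF b f U' X
  | [], _, _, h => h
  | ξ :: X, _, _, h => iterF_mono X (Fmap_mono b f h ξ)

theorem exists_mem_of_mem_Fmap {U : Set (Vstar V)} {w : Vstar V} {ξ : Fin m → BSym I}
    (hw : w ∈ Fmap b f U ξ) : ∃ u ∈ U, w ∈ Fmap b f {u} ξ := by
  unfold Fmap at hw ⊢
  split_ifs at hw ⊢
  · obtain ⟨k, σ, u, hu, he⟩ := hw
    exact ⟨u, hu, k, σ, u, rfl, he⟩
  · obtain ⟨k, σ, u, hu, he⟩ := hw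
    exact ⟨u, hu, k, σ, u, rfl, he⟩
  · exact absurd hw (Set.notMem_empty w)

theorem exists_mem_of_mem_iterF : ∀ (X : List (Fin m → BSym I)) {U : Set (Vstar V)}
    {w : Vstar V}, w ∈ iterF b f U X → ∃ u ∈ U, w ∈ iterF b f {u} X
  | [], _, w, hw => ⟨w, hw, rfl⟩
  | _ :: X, _, _, hw => by
    obtain ⟨u', hu', hw'⟩ := exists_mem_of_mem_iterF X hw
    obtain ⟨u, hu, hu'⟩ := exists_mem_of_mem_Fmap b f hu'
    exact ⟨u, hu, iterF_mono b f X (Set.singleton_subset_iff.2 hu') hw'⟩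

theorem iterF_append : ∀ (X Y : List (Fin m → BSym I)) (U : Set (Vstar V)),
    iterF b f U (X ++ Y) = iterF b f (iterF b f U X) Y
  | [], _, _ => rfl
  | _ :: X, Y, _ => iterF_append X Y _

theorem mem_Fmap_barSwap (hm : 1 ≤ m) {u w : Vstar V} {ξ : Fin m → BSym I}
    (hw : w ∈ Fmap b f {u} ξ) : u ∈ Fmap b f {w} (barSwap ∘ ξ) := by
  unfold Fmap at hw ⊢
  split_ifs at hw with hforward hbackward
  · rw [if_neg fun h => by simpa [barSwap, hforward ⟨0, hm⟩] using h ⟨0, hm⟩,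
      if_pos fun t => by simp [barSwap, hforward t]]
    obtain ⟨k, σ, _, rfl, he⟩ := hw
    exact ⟨k, σ, w, rfl, he⟩
  · rw [if_pos fun t => by simp [barSwap, hbackward t]]
    obtain ⟨k, σ, _, rfl, he⟩ := hw
    exact ⟨k, σ, w, rfl, he⟩
  · exact absurd hw (Set.notMem_empty w)

theorem mem_iterF_reverse (hm : 1 ≤ m) : ∀ (X : List (Fin m → BSym I)) {u w : Vstar V},
    w ∈ iterF b f {u} X → u ∈ iterF b f {w} (X.map (barSwap ∘ ·)).reverse
  | [], _, _, hw => (Set.mem_singleton_iff.1 hw) ▸ rfl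
  | _ :: X, _, _, hw => by
    obtain ⟨u', hu', hw'⟩ := exists_mem_of_mem_iterF b f X hw
    rw [List.map_cons, List.reverse_cons, iterF_append]
    exact Fmap_mono b f (Set.singleton_subset_iff.2 (mem_iterF_reverse hm X hw')) _
      (mem_Fmap_barSwap b f hm hu')

theorem Connected.symm (hm : 1 ≤ m) {i j : I} (h : Connected b f i j) : Connected b f j i := by
  rcases h with rfl | ⟨X, hX, hmem⟩
  · exact Or.inl rfl
  · exact Or.inr ⟨(X.map (barSwap ∘ ·)).reverse, by simpa using hX,
      mem_iterF_reverse b f hm X hmem⟩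

theorem connected_of_apply_ne_zero (hm : 1 ≤ m) (a : Fin (m + 1) → I)
    (hne : f (fun t => b (a t)) ≠ 0) (s t : Fin (m + 1)) : Connected b f (a s) (a t) := by
  have hinsert : ∀ k : Fin (m + 1),
      Fin.insertNth k (b (a k)) (fun r => b (a (k.succAbove r))) = fun t => b (a t) :=
    fun k => Fin.insertNth_eq_iff.2 ⟨rfl, rfl⟩
  refine Or.inr ⟨[fun r => (false, a (s.succAbove r)), fun r => (true, a (t.succAbove r))],
    by simp, ?_⟩
  have hforward : (⟨f (fun t => b (a t)), hne⟩ : Vstar V) ∈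
      Fmap b f {bstar b (a s)} (fun r => (false, a (s.succAbove r))) := by
    unfold Fmap
    rw [if_pos fun r => rfl]
    exact ⟨s, Equiv.refl _, bstar b (a s), rfl, congrArg f (hinsert s)⟩
  refine Fmap_mono b f (Set.singleton_subset_iff.2 hforward) _ ?_
  unfold Fmap
  rw [if_neg fun h => by simpa using h ⟨0, hm⟩, if_pos fun r => rfl]
  exact ⟨t, Equiv.refl _, _, rfl, congrArg f (hinsert t)⟩

theorem ApproxStep.symm {c d : I} (h : ApproxStep b f c d) : ApproxStep b f d c := by
  obtain ⟨k₁, k₂, hlt, h | h⟩ := h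
  · exact ⟨k₁, k₂, hlt, Or.inr h⟩
  · exact ⟨k₁, k₂, hlt, Or.inl h⟩

theorem equivalence_approx (hm : 1 ≤ m) : Equivalence (Approx b f) where
  refl _ := Relation.ReflTransGen.refl
  symm h := by
    induction h with
    | refl => exact Relation.ReflTransGen.refl
    | tail _ hcd ih =>
      exact Relation.ReflTransGen.head (hcd.imp (Connected.symm b f hm) (ApproxStep.symm b f)) ih
  trans := Relation.ReflTransGen.trans

theorem hatSpan_eq_of_approx (hm : 1 ≤ m) {i j : I} (h : Approx b f i j) :
    hatSpan b f i = hatSpan b f j := by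
  have hE := equivalence_approx b f hm
  unfold hatSpan
  congr 2
  exact Set.ext fun p => ⟨hE.trans (hE.symm h), hE.trans h⟩

theorem coord_comp_projClass (c : I) : b.coord c ∘ₗ projClass b f c = b.coord c := by
  refine b.ext fun j => ?_
  by_cases h : Connected b f c j
  · simp [projClass, h]
  · have hjc : j ≠ c := fun hjc => h (Or.inl hjc.symm)
    simp [projClass, h, hjc]

theorem approxStep_of_repr_ne_zero (hm : 1 ≤ m) (a : Fin (m + 1) → I) (k : Fin (m + 1)) {p : I}
    (hp : b.repr (f (fun t => b (a t))) p ≠ 0) : ApproxStep b f (a k) p := by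
  have hne : f (fun t => b (a t)) ≠ 0 := fun h => hp (by simp [h])
  have hmem : ∀ t, b (a t) ∈ classSpan b f (a k) := fun t =>
    Submodule.subset_span ⟨a t, connected_of_apply_ne_zero b f hm a hne k t, rfl⟩
  refine ⟨0, 1, Fin.lt_def.2 (by simp [Nat.mod_eq_of_lt (by omega : 1 < m + 1)]),
    Or.inr ⟨fun t => b (a t), hmem 0, hmem 1, fun h => hp ?_⟩⟩
  simpa [h] using (LinearMap.congr_fun (coord_comp_projClass b f p) (f fun t => b (a t))).symm

theorem stronglyInvariant_hatSpan (hm : 1 ≤ m) (i : I) : StronglyInvariant f (hatSpan b f i) := by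
  intro k v hv
  refine f.apply_mem_of_forall_mem_span_image b _
    (fun t => if t = k then {j | Approx b f i j} else Set.univ) (fun a ha => ?_) v (fun t => ?_)
  · have hak : Approx b f i (a k) := by simpa using ha k
    refine b.mem_span_image.2 fun p hp => hak.tail (Or.inr ?_)
    exact approxStep_of_repr_ne_zero b f hm a k (Finsupp.mem_support_iff.1 hp)
  · by_cases htk : t = k
    · subst htk; simpa [hatSpan] using hv
    · simp [htk, b.span_eq]

theorem fOrthogonal_hatSpan (hm : 1 ≤ m) {i j : I} (hij : ¬ Approx b f i j) :
    FOrthogonal f (hatSpan b f i) (hatSpan b f j) := by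
  intro k₁ k₂ hk v hv₁ hv₂
  rw [← Submodule.mem_bot 𝔽]
  refine f.apply_mem_of_forall_mem_span_image b _
    (fun t => if t = k₁ then {p | Approx b f i p} else if t = k₂ then {p | Approx b f j p}
      else Set.univ) (fun a ha => ?_) v (fun t => ?_)
  · have hi : Approx b f i (a k₁) := by simpa using ha k₁
    have hj : Approx b f j (a k₂) := by simpa [hk.symm] using ha k₂
    by_contra hne
    have hconn := connected_of_apply_ne_zero b f hm a (by simpa using hne) k₁ k₂
    exact hij ((hi.tail (Or.inl hconn)).trans ((equivalence_approx b f hm).symm hj))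
  · by_cases h₁ : t = k₁
    · subst h₁; simpa [hatSpan] using hv₁
    · by_cases h₂ : t = k₂
      · subst h₂; simpa [h₁, hatSpan] using hv₂
      · simp [h₁, h₂, b.span_eq]

end Decomposition

/-- first decomposition theorem. -/
theorem stmt9 (hm : 1 ≤ m) (b : Module.Basis I 𝔽 V)
    (f : MultilinearMap 𝔽 (fun _ : Fin (m + 1) => V) V) :
    iSupIndep (fun W : {W : Submodule 𝔽 V // ∃ i, W = hatSpan b f i} => W.1) ∧
    (⨆ W : {W : Submodule 𝔽 V // ∃ i, W = hatSpan b f i}, W.1) = ⊤ ∧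
    (∀ W₁ W₂ : {W : Submodule 𝔽 V // ∃ i, W = hatSpan b f i},
      W₁ ≠ W₂ → FOrthogonal f W₁.1 W₂.1) ∧
    (∀ i, StronglyInvariant f (hatSpan b f i)) := by
  refine ⟨b.linearIndependent.iSupIndep_span_image_classes (equivalence_approx b f hm),
    (Submodule.iSup_span_image_classes (fun _ => Relation.ReflTransGen.refl) b).trans b.span_eq,
    ?_, stronglyInvariant_hatSpan b f hm⟩
  rintro ⟨_, i, rfl⟩ ⟨_, j, rfl⟩ hne
  exact fOrthogonal_hatSpan b f hm fun hij => hne (Subtype.ext (hatSpan_eq_of_approx b f hm hij))
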